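/- Let X and Y be nonempty finite sets and let μ and ν be possibility measures on X and Y respectively. Then the set function π on subsets of X × Y defined by π(∅) = 0 and π(N) = max_{(x,y) ∈ N} μ({x})·ν({y}) for nonempty N is a possibility measure and belongs to Π_Ch(μ,ν). -/

import Mathlib

open Finset MeasureTheory

/-- A capacity on a finite set `Z`: a monotone set function vanishing on `∅`. -/
def IsCapacity {Z : Type*} (γ : Finset Z → ℝ) : Prop :=
  γ ∅ = 0 ∧ ∀ A B : Finset Z, A ⊆ B → γ A ≤ γ B

/-- A normalized capacity: a capacity with `γ(Z) = 1`. -/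
def IsNormalizedCapacity {Z : Type*} [Fintype Z] (γ : Finset Z → ℝ) : Prop :=
  IsCapacity γ ∧ γ Finset.univ = 1

/-- Membership of a capacity `π` on `X × Y` in `Π_Ch(μ, ν)`:
`π` is a capacity whose marginals are `μ` and `ν`. -/
def InPiCh {X Y : Type*} [Fintype X] [Fintype Y]
    (μ : Finset X → ℝ) (ν : Finset Y → ℝ) (π : Finset (X × Y) → ℝ) : Prop :=
  IsCapacity π ∧ (∀ A : Finset X, π (A ×ˢ Finset.univ) = μ A) ∧
    (∀ B : Finset Y, π (Finset.univ ×ˢ B) = ν B)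

/-- A possibility measure on a finite set: a normalized capacity with
`γ(A ∪ B) = max(γ(A), γ(B))`. -/
def IsPossibility {Z : Type*} [Fintype Z] [DecidableEq Z] (γ : Finset Z → ℝ) : Prop :=
  IsNormalizedCapacity γ ∧ ∀ A B : Finset Z, γ (A ∪ B) = max (γ A) (γ B)

/-- The product possibility set function: `π(∅) = 0` and
`π(N) = max_{(x,y) ∈ N} μ({x}) · ν({y})` for nonempty `N`. -/
noncomputable def possProd {X Y : Type*} (μ : Finset X → ℝ) (ν : Finset Y → ℝ) :
    Finset (X × Y) → ℝ :=
  fun N => if h : N.Nonempty then N.sup' h (fun p => μ {p.1} * ν {p.2}) else 0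

/-! Maxitivity of `possProd` is immediate from its definition as a maximum, and monotonicity
follows from maxitivity. On a rectangle `A ×ˢ B` the maximum of `μ {x} * ν {y}` splits, by
nonnegativity, into `(max_A μ {x}) * (max_B ν {y}) = μ A * ν B`; taking `B` or `A` to be the
whole space gives the marginals, since `ν univ = μ univ = 1`. -/

theorem Finset.sup'_product_mul_of_nonneg {X Y : Type*} {A : Finset X} {B : Finset Y}
    (hA : A.Nonempty) (hB : B.Nonempty) {f : X → ℝ} {g : Y → ℝ}
    (hf : ∀ x ∈ A, 0 ≤ f x) (hg : ∀ y ∈ B, 0 ≤ g y) :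
    (A ×ˢ B).sup' (hA.product hB) (fun p => f p.1 * g p.2) = A.sup' hA f * B.sup' hB g := by
  have hg_sup : 0 ≤ B.sup' hB g :=
    let ⟨y, hy⟩ := hB
    (hg y hy).trans (le_sup' g hy)
  rw [sup'_product_left, sup'_mul₀ hg_sup]
  exact sup'_congr _ rfl fun x hx => (mul₀_sup' (hf x hx) g B hB).symm

section SetFunction

variable {Z : Type*}

theorem IsCapacity.nonneg {γ : Finset Z → ℝ} (hγ : IsCapacity γ) (A : Finset Z) : 0 ≤ γ A :=
  hγ.1 ▸ hγ.2 ∅ A (empty_subset A)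

theorem IsCapacity.of_union_eq_max [DecidableEq Z] {γ : Finset Z → ℝ} (h_empty : γ ∅ = 0)
    (h_union : ∀ A B, γ (A ∪ B) = max (γ A) (γ B)) : IsCapacity γ := by
  refine ⟨h_empty, fun A B hAB => ?_⟩
  rw [← union_eq_right.mpr hAB, h_union]
  exact le_max_left _ _

theorem IsPossibility.eq_sup' [Fintype Z] [DecidableEq Z] {γ : Finset Z → ℝ}
    (hγ : IsPossibility γ) {A : Finset Z} (hA : A.Nonempty) :
    γ A = A.sup' hA (fun z => γ {z}) := by
  induction hA using Nonempty.cons_induction with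
  | singleton a => rfl
  | cons a s ha hs ih => rw [sup'_cons hs, cons_eq_insert, insert_eq, hγ.2, ih]

end SetFunction

section PossProd

variable {X Y : Type*} {μ : Finset X → ℝ} {ν : Finset Y → ℝ}

theorem possProd_empty : possProd μ ν ∅ = 0 := rfl

theorem possProd_of_nonempty {N : Finset (X × Y)} (hN : N.Nonempty) :
    possProd μ ν N = N.sup' hN (fun p => μ {p.1} * ν {p.2}) :=
  dif_pos hN

theorem possProd_nonneg (hμ : IsCapacity μ) (hν : IsCapacity ν) (N : Finset (X × Y)) :
    0 ≤ possProd μ ν N := by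
  rcases N.eq_empty_or_nonempty with rfl | ⟨p, hp⟩
  · rfl
  · rw [possProd_of_nonempty ⟨p, hp⟩]
    exact (mul_nonneg (hμ.nonneg _) (hν.nonneg _)).trans
      (le_sup' (fun p : X × Y => μ {p.1} * ν {p.2}) hp)

variable [DecidableEq X] [DecidableEq Y]

theorem possProd_union (hμ : IsCapacity μ) (hν : IsCapacity ν) (A B : Finset (X × Y)) :
    possProd μ ν (A ∪ B) = max (possProd μ ν A) (possProd μ ν B) := by
  rcases A.eq_empty_or_nonempty with rfl | hA
  · rw [possProd_empty, empty_union, max_eq_right (possProd_nonneg hμ hν B)]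
  rcases B.eq_empty_or_nonempty with rfl | hB
  · rw [possProd_empty, union_empty, max_eq_left (possProd_nonneg hμ hν A)]
  rw [possProd_of_nonempty (hA.mono subset_union_left), possProd_of_nonempty hA,
    possProd_of_nonempty hB, sup'_union hA hB]

theorem possProd_product [Fintype X] [Fintype Y] (hμ : IsPossibility μ) (hν : IsPossibility ν)
    (A : Finset X) (B : Finset Y) : possProd μ ν (A ×ˢ B) = μ A * ν B := by
  rcases A.eq_empty_or_nonempty with rfl | hA
  · rw [empty_product, possProd_empty, hμ.1.1.1, zero_mul]
  rcases B.eq_empty_or_nonempty with rfl | hB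
  · rw [product_empty, possProd_empty, hν.1.1.1, mul_zero]
  rw [possProd_of_nonempty (hA.product hB),
    sup'_product_mul_of_nonneg hA hB (fun x _ => hμ.1.1.nonneg _) (fun y _ => hν.1.1.nonneg _),
    ← hμ.eq_sup' hA, ← hν.eq_sup' hB]

end PossProd

theorem possProd_possibility_mem_piCh_general {X Y : Type*} [Fintype X] [Fintype Y]
    [DecidableEq X] [DecidableEq Y]
    (μ : Finset X → ℝ) (ν : Finset Y → ℝ)
    (hμ : IsPossibility μ) (hν : IsPossibility ν) :
    IsPossibility (possProd μ ν) ∧ InPiCh μ ν (possProd μ ν) := by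
  have h_union := possProd_union hμ.1.1 hν.1.1
  have h_cap : IsCapacity (possProd μ ν) := .of_union_eq_max possProd_empty h_union
  have h_univ : possProd μ ν univ = 1 := by
    rw [← univ_product_univ, possProd_product hμ hν, hμ.1.2, hν.1.2, one_mul]
  refine ⟨⟨⟨h_cap, h_univ⟩, h_union⟩, h_cap, fun A => ?_, fun B => ?_⟩
  · rw [possProd_product hμ hν, hν.1.2, mul_one]
  · rw [possProd_product hμ hν, hμ.1.2, one_mul]

/-- if `μ` and `ν` are possibility measures, then `possProd μ ν` is a
possibility measure belonging to `Π_Ch(μ, ν)`. -/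
theorem possProd_possibility_mem_piCh {X Y : Type*} [Fintype X] [Fintype Y]
    [Nonempty X] [Nonempty Y] [DecidableEq X] [DecidableEq Y]
    (μ : Finset X → ℝ) (ν : Finset Y → ℝ)
    (hμ : IsPossibility μ) (hν : IsPossibility ν) :
    IsPossibility (possProd μ ν) ∧ InPiCh μ ν (possProd μ ν) :=
  possProd_possibility_mem_piCh_general μ ν hμ hν
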